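/- For a simple random walk on a finite connected graph G with m edges and any two vertices x, y at distance d, the hitting time satisfies H(x,y) ≤ m^2 − (m−d)^2. -/
import Mathlib

open Finset

set_option linter.unusedSectionVars false
set_option maxHeartbeats 1000000

/-- `IsHittingTime G a H` : `H` satisfies the linear system characterizing the expected
hitting times of the absorbing vertex `a` for the simple random walk on `G`. -/
def IsHittingTime {V : Type*} [Fintype V] (G : SimpleGraph V) [DecidableRel G.Adj]
    (a : V) (H : V → ℝ) : Prop :=
  H a = 0 ∧ ∀ x, x ≠ a →
    (G.degree x : ℝ) * H x = (G.degree x : ℝ) + ∑ y ∈ G.neighborFinset x, H y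

namespace HitProof

variable {V : Type*} [Fintype V] [DecidableEq V] {G : SimpleGraph V} [DecidableRel G.Adj]

/-- The graph Laplacian applied to `g`. -/
def lap (G : SimpleGraph V) [DecidableRel G.Adj] (g : V → ℝ) (x : V) : ℝ :=
  (G.degree x : ℝ) * g x - ∑ y ∈ G.neighborFinset x, g y

lemma propagate (hconn : G.Connected) (g : V → ℝ) (P : V → Prop)
    (hsub : ∀ x, ¬ P x → (G.degree x : ℝ) * g x ≤ ∑ y ∈ G.neighborFinset x, g y)
    (t : V) (ht : P t) : ∃ s, P s ∧ ∀ u, g u ≤ g s := by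
  obtain ⟨v, -, hv⟩ := Finset.exists_max_image Finset.univ g ⟨t, Finset.mem_univ t⟩
  have hv' : ∀ u, g u ≤ g v := fun u => hv u (Finset.mem_univ u)
  obtain ⟨p⟩ := hconn v t
  suffices h : ∀ (u w : V) (p : G.Walk u w), P w → g u = g v → ∃ s, P s ∧ g s = g v by
    obtain ⟨s, hs, hgs⟩ := h v t p ht rfl
    exact ⟨s, hs, fun u => hgs ▸ hv' u⟩
  intro u w p
  induction p with
  | nil => exact fun hP h => ⟨_, hP, h⟩
  | @cons u b t hadj q ih =>
    intro ht' hu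
    by_cases hPu : P u
    · exact ⟨u, hPu, hu⟩
    · have h1 := hsub u hPu
      have hsumz : ∑ y ∈ G.neighborFinset u, (g v - g y) = 0 := by
        have hle : ∑ y ∈ G.neighborFinset u, (g v - g y) ≤ 0 := by
          rw [Finset.sum_sub_distrib, Finset.sum_const, nsmul_eq_mul,
            SimpleGraph.card_neighborFinset_eq_degree]
          rw [hu] at h1
          linarith
        have hge : (0:ℝ) ≤ ∑ y ∈ G.neighborFinset u, (g v - g y) :=
          Finset.sum_nonneg fun y _ => by linarith [hv' y]
        linarith
      have hall := (Finset.sum_eq_zero_iff_of_nonneg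
        (fun y _ => by linarith [hv' y] : ∀ y ∈ G.neighborFinset u, (0:ℝ) ≤ g v - g y)).mp hsumz
      have hb : g b = g v := by
        have := hall b ((SimpleGraph.mem_neighborFinset G u b).mpr hadj)
        linarith
      exact ih ht' hb

lemma le_max_pair (hconn : G.Connected) (g : V → ℝ) (a z : V)
    (h0 : ∀ x, x ≠ a → x ≠ z → lap G g x = 0) :
    ∀ u, g u ≤ max (g a) (g z) := by
  have hsub : ∀ x, ¬ (x = a ∨ x = z) → (G.degree x : ℝ) * g x ≤ ∑ y ∈ G.neighborFinset x, g y := by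
    intro x hx
    push_neg at hx
    have h := h0 x hx.1 hx.2
    rw [lap, sub_eq_zero] at h
    exact le_of_eq h
  obtain ⟨s, hs, hle⟩ := propagate hconn g (fun x => x = a ∨ x = z) hsub a (Or.inl rfl)
  intro u
  rcases hs with h | h
  · subst h; exact le_trans (hle u) (le_max_left _ _)
  · subst h; exact le_trans (hle u) (le_max_right _ _)

lemma ge_min_pair (hconn : G.Connected) (g : V → ℝ) (a z : V)
    (h0 : ∀ x, x ≠ a → x ≠ z → lap G g x = 0) :
    ∀ u, min (g a) (g z) ≤ g u := by
  have h0' : ∀ x, x ≠ a → x ≠ z → lap G (fun v => - g v) x = 0 := by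
    intro x h1 h2
    have := h0 x h1 h2
    rw [lap] at this ⊢
    rw [Finset.sum_neg_distrib]
    ring_nf
    linarith
  have := le_max_pair hconn (fun v => - g v) a z h0'
  intro u
  have hu := this u
  simp only [le_max_iff, neg_le_neg_iff] at hu
  rcases hu with h | h
  · exact le_trans (min_le_left _ _) h
  · exact le_trans (min_le_right _ _) h

lemma eq_zero_of_harmonic (hconn : G.Connected) (g : V → ℝ) (a : V)
    (ha : g a = 0) (h0 : ∀ x, x ≠ a → lap G g x = 0) : ∀ x, g x = 0 := by
  intro x
  have h1 := le_max_pair hconn g a a (fun x hx _ => h0 x hx) x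
  have h2 := ge_min_pair hconn g a a (fun x hx _ => h0 x hx) x
  rw [ha] at h1 h2
  simp at h1 h2
  linarith


/-- The linear map whose inverse provides the Green's function. -/
noncomputable def Tmap (G : SimpleGraph V) [DecidableRel G.Adj] (a : V) :
    (V → ℝ) →ₗ[ℝ] (V → ℝ) where
  toFun g := fun x => if x = a then g x else lap G g x
  map_add' g h := by
    funext x
    by_cases hx : x = a <;> simp [hx, lap, Finset.sum_add_distrib] <;> ring
  map_smul' c g := by
    funext x
    by_cases hx : x = a
    · simp [hx]
    · simp only [hx, if_false, ite_false, eq_self_iff_true, smul_eq_mul, RingHom.id_apply,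
        Pi.smul_apply, lap]
      rw [mul_sub, Finset.mul_sum]
      have : ∑ y ∈ G.neighborFinset x, c * g y = ∑ y ∈ G.neighborFinset x, g y * c := by
        exact Finset.sum_congr rfl fun y _ => by ring
      rw [this, ← Finset.sum_mul]
      ring


lemma lap_tmap (a : V) (g : V → ℝ) (x : V) (hx : x ≠ a) :
    Tmap G a g x = lap G g x := if_neg hx

lemma Tmap_injective (hconn : G.Connected) (a : V) :
    Function.Injective (Tmap G a) := by
  rw [injective_iff_map_eq_zero]
  intro g hg
  have ha : g a = 0 := by
    have := congrFun hg a
    simpa [Tmap] using this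
  have h0 : ∀ x, x ≠ a → lap G g x = 0 := by
    intro x hx
    have := congrFun hg x
    rwa [lap_tmap a g x hx] at this
  funext x
  exact eq_zero_of_harmonic hconn g a ha h0 x

lemma Tmap_surjective (hconn : G.Connected) (a : V) :
    Function.Surjective (Tmap G a) :=
  LinearMap.injective_iff_surjective.mp (Tmap_injective hconn a)

/-- Green's function of the reduced Laplacian: `Grn hconn a z` is the vector of voltages
when a unit current is injected at `z` and extracted at the grounded vertex `a`. -/
noncomputable def Grn (hconn : G.Connected) (a z : V) : V → ℝ :=
  if z = a then 0 else Classical.choose (Tmap_surjective hconn a (Pi.single z 1))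

lemma Grn_spec (hconn : G.Connected) {a z : V} (hz : z ≠ a) :
    Tmap G a (Grn hconn a z) = Pi.single z 1 := by
  rw [Grn, if_neg hz]
  exact Classical.choose_spec (Tmap_surjective hconn a (Pi.single z 1))

@[simp] lemma Grn_self (hconn : G.Connected) (a : V) : Grn hconn a a = 0 := if_pos rfl

lemma Grn_apply_a (hconn : G.Connected) (a z : V) : Grn hconn a z a = 0 := by
  by_cases hz : z = a
  · simp [hz]
  · have := congrFun (Grn_spec hconn hz) a
    rw [show Tmap G a (Grn hconn a z) a = Grn hconn a z a from if_pos rfl] at this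
    rw [this, Pi.single_apply, if_neg (Ne.symm hz)]

lemma lap_Grn (hconn : G.Connected) {a z : V} (hz : z ≠ a) {x : V} (hx : x ≠ a) :
    lap G (Grn hconn a z) x = if x = z then 1 else 0 := by
  have := congrFun (Grn_spec hconn hz) x
  rw [lap_tmap a _ x hx] at this
  rw [this, Pi.single_apply]

lemma lap_Grn_diag (hconn : G.Connected) {a z : V} (hz : z ≠ a) :
    lap G (Grn hconn a z) z = 1 := by
  rw [lap_Grn hconn hz hz, if_pos rfl]

lemma Grn_harm (hconn : G.Connected) {a z : V} (hz : z ≠ a) :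
    ∀ x, x ≠ a → x ≠ z → lap G (Grn hconn a z) x = 0 := by
  intro x hxa hxz
  rw [lap_Grn hconn hz hxa, if_neg hxz]

lemma Grn_diag_nonneg (hconn : G.Connected) {a z : V} (hz : z ≠ a) :
    0 ≤ Grn hconn a z z := by
  by_contra hneg
  push_neg at hneg
  have hmin := ge_min_pair hconn (Grn hconn a z) a z (Grn_harm hconn hz)
  have hmin' : ∀ u, Grn hconn a z z ≤ Grn hconn a z u := by
    intro u
    have := hmin u
    rw [Grn_apply_a hconn a z] at this
    calc Grn hconn a z z ≤ min 0 (Grn hconn a z z) := le_min (le_of_lt hneg) le_rfl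
    _ ≤ Grn hconn a z u := this
  have heq := lap_Grn_diag hconn hz
  rw [lap] at heq
  have hsum : (G.degree z : ℝ) * Grn hconn a z z ≤ ∑ y ∈ G.neighborFinset z, Grn hconn a z y := by
    calc (G.degree z : ℝ) * Grn hconn a z z
        = ∑ _y ∈ G.neighborFinset z, Grn hconn a z z := by
          rw [Finset.sum_const, nsmul_eq_mul, SimpleGraph.card_neighborFinset_eq_degree]
      _ ≤ _ := Finset.sum_le_sum fun y _ => hmin' y
  linarith

lemma Grn_nonneg (hconn : G.Connected) {a z : V} (hz : z ≠ a) (x : V) :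
    0 ≤ Grn hconn a z x := by
  have hmin := ge_min_pair hconn (Grn hconn a z) a z (Grn_harm hconn hz) x
  rw [Grn_apply_a hconn a z] at hmin
  have := Grn_diag_nonneg hconn hz
  calc (0:ℝ) = min 0 0 := by simp
  _ ≤ min 0 (Grn hconn a z z) := by exact min_le_min le_rfl this |>.trans_eq rfl
  _ ≤ _ := hmin

lemma Grn_le_diag (hconn : G.Connected) {a z : V} (hz : z ≠ a) (x : V) :
    Grn hconn a z x ≤ Grn hconn a z z := by
  have hmax := le_max_pair hconn (Grn hconn a z) a z (Grn_harm hconn hz) x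
  rw [Grn_apply_a hconn a z] at hmax
  have h0 := Grn_diag_nonneg hconn hz
  rwa [max_eq_right h0] at hmax

lemma lap_bilin (g h : V → ℝ) :
    ∑ x, g x * lap G h x = ∑ x, h x * lap G g x := by
  have key : ∀ (f1 f2 : V → ℝ), ∑ x, ∑ y ∈ G.neighborFinset x, f1 x * f2 y
      = ∑ x, ∑ y ∈ G.neighborFinset x, f2 x * f1 y := by
    intro f1 f2
    have expand : ∀ (f1 f2 : V → ℝ), ∑ x, ∑ y ∈ G.neighborFinset x, f1 x * f2 y
        = ∑ x, ∑ y, if G.Adj x y then f1 x * f2 y else 0 := by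
      intro f1 f2
      refine Finset.sum_congr rfl fun x _ => ?_
      rw [SimpleGraph.neighborFinset_eq_filter, Finset.sum_filter]
    rw [expand, expand, Finset.sum_comm]
    refine Finset.sum_congr rfl fun x _ => Finset.sum_congr rfl fun y _ => ?_
    by_cases hxy : G.Adj x y
    · rw [if_pos hxy, if_pos hxy.symm, mul_comm]
    · rw [if_neg hxy, if_neg fun h => hxy h.symm]
  simp only [lap, mul_sub, Finset.mul_sum]
  rw [Finset.sum_sub_distrib, Finset.sum_sub_distrib, key g h]
  congr 1
  exact Finset.sum_congr rfl fun x _ => by ring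

lemma Grn_symm (hconn : G.Connected) (a z w : V) :
    Grn hconn a z w = Grn hconn a w z := by
  by_cases hz : z = a
  · subst hz
    rw [Grn_self, Grn_apply_a]
    rfl
  by_cases hw : w = a
  · subst hw
    rw [Grn_self, Grn_apply_a]
    rfl
  have compute : ∀ (u v : V), u ≠ a → v ≠ a →
      ∑ x, Grn hconn a u x * lap G (Grn hconn a v) x = Grn hconn a u v := by
    intro u v hu hv
    have hterm : ∀ x, Grn hconn a u x * lap G (Grn hconn a v) x
        = if x = v then Grn hconn a u v else 0 := by
      intro x
      by_cases hxa : x = a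
      · subst hxa
        rw [Grn_apply_a, zero_mul, if_neg (Ne.symm hv)]
      · rw [lap_Grn hconn hv hxa]
        by_cases hxv : x = v
        · subst hxv; rw [if_pos rfl, if_pos rfl, mul_one]
        · rw [if_neg hxv, if_neg hxv, mul_zero]
    calc ∑ x, Grn hconn a u x * lap G (Grn hconn a v) x
        = ∑ x, if x = v then Grn hconn a u v else 0 := Finset.sum_congr rfl fun x _ => hterm x
      _ = Grn hconn a u v := by rw [Finset.sum_ite_eq' Finset.univ v fun _ => Grn hconn a u v,
            if_pos (Finset.mem_univ v)]
  have h1 := compute z w hz hw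
  have h2 := compute w z hw hz
  rw [← h1, ← h2, lap_bilin]

lemma Grn_edge (hconn : G.Connected) {a z z' : V} (hz : z ≠ a) (hadj : G.Adj z z') :
    Grn hconn a z z - Grn hconn a z z' ≤ 1 := by
  have heq := lap_Grn_diag hconn hz
  rw [lap] at heq
  have hsplit : ∑ y ∈ G.neighborFinset z, (Grn hconn a z z - Grn hconn a z y)
      = (G.degree z : ℝ) * Grn hconn a z z - ∑ y ∈ G.neighborFinset z, Grn hconn a z y := by
    rw [Finset.sum_sub_distrib, Finset.sum_const, nsmul_eq_mul,
      SimpleGraph.card_neighborFinset_eq_degree]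
  have hone : ∑ y ∈ G.neighborFinset z, (Grn hconn a z z - Grn hconn a z y) = 1 := by
    rw [hsplit, heq]
  have key : ∀ y ∈ G.neighborFinset z, (0:ℝ) ≤ Grn hconn a z z - Grn hconn a z y :=
    fun y _ => sub_nonneg.mpr (Grn_le_diag hconn hz y)
  have hsingle : Grn hconn a z z - Grn hconn a z z'
      ≤ ∑ y ∈ G.neighborFinset z, (Grn hconn a z z - Grn hconn a z y) :=
    Finset.single_le_sum key ((SimpleGraph.mem_neighborFinset G z z').mpr hadj)
  linarith

lemma Grn_diag_le_dist (hconn : G.Connected) (a : V) :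
    ∀ (n : ℕ) (z : V), G.dist z a ≤ n → Grn hconn a z z ≤ (G.dist z a : ℝ) := by
  intro n
  induction n with
  | zero =>
    intro z hz
    have : z = a := hconn.dist_eq_zero_iff.mp (Nat.le_zero.mp hz)
    subst this
    simp
  | succ n ih =>
    intro z hz
    by_cases hle : G.dist z a ≤ n
    · exact ih z hle
    have hd : G.dist z a = n + 1 := le_antisymm hz (not_le.mp hle)
    have hza : z ≠ a := by
      intro h; subst h; rw [SimpleGraph.dist_self] at hd; omega
    obtain ⟨p, hp⟩ := hconn.exists_walk_length_eq_dist z a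
    cases p with
    | nil => exact absurd rfl hza
    | @cons _ b _ hadj q =>
      have hq : q.length ≤ n := by
        rw [SimpleGraph.Walk.length_cons, hd] at hp
        omega
      have hdb : G.dist b a ≤ n := le_trans (SimpleGraph.dist_le q) hq
      have h1 : Grn hconn a z z - Grn hconn a z b ≤ 1 := Grn_edge hconn hza hadj
      have h2 : Grn hconn a z b = Grn hconn a b z := Grn_symm hconn a z b
      have h3 : Grn hconn a b z ≤ Grn hconn a b b := by
        by_cases hb : b = a
        · subst hb; simp
        · exact Grn_le_diag hconn hb z
      have h4 : Grn hconn a b b ≤ (G.dist b a : ℝ) := ih b hdb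
      have h5 : (G.dist b a : ℝ) ≤ (n : ℝ) := by exact_mod_cast hdb
      rw [hd]
      push_cast
      linarith

lemma lap_sum {ι : Type*} (s : Finset ι) (c : ι → ℝ) (g : ι → V → ℝ) (x : V) :
    lap G (fun v => ∑ i ∈ s, c i * g i v) x = ∑ i ∈ s, c i * lap G (g i) x := by
  unfold lap
  rw [Finset.mul_sum, Finset.sum_comm]
  rw [← Finset.sum_sub_distrib]
  refine Finset.sum_congr rfl fun i _ => ?_
  rw [← Finset.mul_sum]
  ring

/-- The candidate hitting-time function, written via the Green's function. -/
noncomputable def hdef (hconn : G.Connected) (a : V) : V → ℝ :=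
  fun x => ∑ z ∈ Finset.univ.erase a, (G.degree z : ℝ) * Grn hconn a z x

lemma hdef_a (hconn : G.Connected) (a : V) : hdef hconn a a = 0 := by
  unfold hdef
  refine Finset.sum_eq_zero fun z _ => ?_
  rw [Grn_apply_a, mul_zero]

lemma lap_hdef (hconn : G.Connected) (a : V) {x : V} (hx : x ≠ a) :
    lap G (hdef hconn a) x = (G.degree x : ℝ) := by
  unfold hdef
  rw [lap_sum]
  have : ∀ z ∈ Finset.univ.erase a, (G.degree z : ℝ) * lap G (Grn hconn a z) x
      = if x = z then (G.degree z : ℝ) else 0 := by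
    intro z hzmem
    have hz : z ≠ a := (Finset.mem_erase.mp hzmem).1
    rw [lap_Grn hconn hz hx, mul_ite, mul_one, mul_zero]
  rw [Finset.sum_congr rfl this, Finset.sum_ite_eq (Finset.univ.erase a) x
    (fun z => (G.degree z : ℝ)), if_pos (Finset.mem_erase.mpr ⟨hx, Finset.mem_univ x⟩)]

lemma H_eq (hconn : G.Connected) (a : V) (H : V → ℝ)
    (ha : H a = 0)
    (heqn : ∀ x, x ≠ a → (G.degree x : ℝ) * H x
      = (G.degree x : ℝ) + ∑ y ∈ G.neighborFinset x, H y) :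
    ∀ x, H x = hdef hconn a x := by
  have key : ∀ x, H x - hdef hconn a x = 0 := by
    refine eq_zero_of_harmonic hconn (fun v => H v - hdef hconn a v) a ?_ ?_
    · show H a - hdef hconn a a = 0
      rw [ha, hdef_a, sub_zero]
    · intro x hx
      have hlapH : lap G H x = (G.degree x : ℝ) := by
        rw [lap, heqn x hx]; ring
      have hsub : lap G (fun v => H v - hdef hconn a v) x
          = lap G H x - lap G (hdef hconn a) x := by
        unfold lap
        rw [Finset.sum_sub_distrib]
        ring
      rw [hsub, hlapH, lap_hdef hconn a hx, sub_self]
  intro x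
  have := key x
  linarith

lemma dist_getVert_le (hconn : G.Connected) {u w : V} (p : G.Walk u w) :
    ∀ i, G.dist u (p.getVert i) ≤ i := by
  induction p with
  | nil => intro i; simp [SimpleGraph.Walk.getVert, SimpleGraph.dist_self]
  | @cons u b w hadj q ih =>
    intro i
    cases i with
    | zero => simp [SimpleGraph.Walk.getVert_zero, SimpleGraph.dist_self]
    | succ i =>
      rw [SimpleGraph.Walk.getVert_cons_succ]
      calc G.dist u (q.getVert i) ≤ G.dist u b + G.dist b (q.getVert i) := hconn.dist_triangle
        _ ≤ 1 + i := by
            have h1 : G.dist u b = 1 := SimpleGraph.dist_eq_one_iff_adj.mpr hadj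
            have h2 := ih i
            omega
        _ = i + 1 := by omega

lemma dist_getVert_end_le {u w : V} (p : G.Walk u w) :
    ∀ i, G.dist (p.getVert i) w ≤ p.length - i := by
  induction p with
  | nil => intro i; simp [SimpleGraph.Walk.getVert, SimpleGraph.dist_self]
  | @cons u b w hadj q ih =>
    intro i
    cases i with
    | zero =>
      rw [SimpleGraph.Walk.getVert_zero, Nat.sub_zero]
      exact SimpleGraph.dist_le _
    | succ i =>
      rw [SimpleGraph.Walk.getVert_cons_succ, SimpleGraph.Walk.length_cons,
        Nat.succ_sub_succ]
      exact ih i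

lemma dist_getVert_eq (hconn : G.Connected) {a x : V} (p : G.Walk a x)
    (hp : p.length = G.dist a x) {i : ℕ} (hi : i ≤ p.length) :
    G.dist a (p.getVert i) = i := by
  have h1 := dist_getVert_le hconn p i
  have h2 := dist_getVert_end_le p i
  have h3 : G.dist a x ≤ G.dist a (p.getVert i) + G.dist (p.getVert i) x := hconn.dist_triangle
  omega

lemma gauss_sum : ∀ (d : ℕ), 1 ≤ d →
    2 * ∑ i ∈ Finset.Ioo 0 d, ((d : ℝ) - (i : ℝ)) = (d : ℝ)^2 - (d : ℝ) := by
  intro d hd1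
  induction d, hd1 using Nat.le_induction with
  | base =>
    have h : Finset.Ioo 0 1 = ∅ := by
      ext i; simp only [Finset.mem_Ioo, Finset.notMem_empty, iff_false]; omega
    simp [h]
  | succ d hd ih =>
    have hins : Finset.Ioo 0 (d+1) = insert d (Finset.Ioo 0 d) := by
      ext i
      simp only [Finset.mem_Ioo, Finset.mem_insert]
      omega
    rw [hins, Finset.sum_insert (by simp)]
    have hstep : ∑ i ∈ Finset.Ioo 0 d, ((↑(d+1):ℝ) - (i:ℝ))
        = ∑ i ∈ Finset.Ioo 0 d, ((d:ℝ) - (i:ℝ)) + ((Finset.Ioo 0 d).card : ℝ) := by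
      calc ∑ i ∈ Finset.Ioo 0 d, ((↑(d+1):ℝ) - (i:ℝ))
          = ∑ i ∈ Finset.Ioo 0 d, (((d:ℝ) - (i:ℝ)) + 1) := by
            refine Finset.sum_congr rfl fun i _ => ?_
            push_cast
            ring
        _ = ∑ i ∈ Finset.Ioo 0 d, ((d:ℝ) - (i:ℝ)) + ∑ _i ∈ Finset.Ioo 0 d, (1:ℝ) :=
            Finset.sum_add_distrib
        _ = ∑ i ∈ Finset.Ioo 0 d, ((d:ℝ) - (i:ℝ)) + ((Finset.Ioo 0 d).card : ℝ) := by
            rw [Finset.sum_const, nsmul_eq_mul, mul_one]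
    have hcard : ((Finset.Ioo 0 d).card : ℝ) = (d : ℝ) - 1 := by
      rw [Nat.card_Ioo]
      have : d - 0 - 1 = d - 1 := by omega
      rw [this, Nat.cast_sub hd]
      simp
    push_cast at hstep ⊢
    rw [hstep, hcard]
    push_cast at ih
    ring_nf
    ring_nf at ih
    linarith

lemma final_sum_bound (hconn : G.Connected) (a x : V) (m d : ℕ)
    (hm : m = G.edgeFinset.card) (hd : d = G.dist x a) (hd1 : 1 ≤ d) :
    ∑ z ∈ Finset.univ.erase a, (G.degree z : ℝ) * min (d : ℝ) (G.dist z a : ℝ)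
      ≤ 2 * (m : ℝ) * (d : ℝ) - (d : ℝ)^2 := by
  obtain ⟨p, hp⟩ := hconn.exists_walk_length_eq_dist a x
  have hpl : p.length = d := by rw [hp, SimpleGraph.dist_comm]; omega
  have hvd : ∀ i, i ≤ d → G.dist a (p.getVert i) = i := by
    intro i hi
    exact dist_getVert_eq hconn p hp (by omega)
  have hvd' : ∀ i, i ≤ d → G.dist (p.getVert i) a = i := by
    intro i hi
    rw [SimpleGraph.dist_comm]; exact hvd i hi
  have hvne : ∀ i, i ∈ Finset.Ioo 0 d → p.getVert i ≠ a := by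
    intro i hi
    rw [Finset.mem_Ioo] at hi
    intro h
    have := hvd i (le_of_lt hi.2)
    rw [h, SimpleGraph.dist_self] at this
    omega
  have hinj : ∀ i ∈ Finset.Ioo 0 d, ∀ j ∈ Finset.Ioo 0 d,
      p.getVert i = p.getVert j → i = j := by
    intro i hi j hj h
    rw [Finset.mem_Ioo] at hi hj
    have h1 := hvd i (le_of_lt hi.2)
    have h2 := hvd j (le_of_lt hj.2)
    rw [h] at h1
    omega
  have hdeg2 : ∀ i ∈ Finset.Ioo 0 d, 2 ≤ G.degree (p.getVert i) := by
    intro i hi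
    rw [Finset.mem_Ioo] at hi
    have hadj1 : G.Adj (p.getVert i) (p.getVert (i - 1)) := by
      have := p.adj_getVert_succ (i := i - 1) (by omega)
      have heq : i - 1 + 1 = i := by omega
      rw [heq] at this
      exact this.symm
    have hadj2 : G.Adj (p.getVert i) (p.getVert (i + 1)) :=
      p.adj_getVert_succ (by omega)
    have hne : p.getVert (i - 1) ≠ p.getVert (i + 1) := by
      intro h
      have h1 := hvd (i - 1) (by omega)
      have h2 := hvd (i + 1) (by omega)
      rw [h] at h1
      omega
    have hsub : {p.getVert (i - 1), p.getVert (i + 1)} ⊆ G.neighborFinset (p.getVert i) := by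
      intro u hu
      rw [Finset.mem_insert, Finset.mem_singleton] at hu
      rw [SimpleGraph.mem_neighborFinset]
      rcases hu with h | h
      · subst h; exact hadj1
      · subst h; exact hadj2
    calc 2 = ({p.getVert (i - 1), p.getVert (i + 1)} : Finset V).card := by
          rw [Finset.card_insert_of_notMem (by simpa using hne), Finset.card_singleton]
      _ ≤ (G.neighborFinset (p.getVert i)).card := Finset.card_le_card hsub
      _ = G.degree (p.getVert i) := G.card_neighborFinset_eq_degree _
  set T : Finset V := (Finset.Ioo 0 d).image (fun i => p.getVert i) with hT
  have hTsub : T ⊆ Finset.univ.erase a := by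
    intro u hu
    rw [hT, Finset.mem_image] at hu
    obtain ⟨i, hi, rfl⟩ := hu
    exact Finset.mem_erase.mpr ⟨hvne i hi, Finset.mem_univ _⟩
  have hsplit : ∑ z ∈ Finset.univ.erase a, (G.degree z : ℝ) * min (d : ℝ) (G.dist z a : ℝ)
      = ∑ z ∈ Finset.univ.erase a \ T, (G.degree z : ℝ) * min (d : ℝ) (G.dist z a : ℝ)
        + ∑ z ∈ T, (G.degree z : ℝ) * min (d : ℝ) (G.dist z a : ℝ) :=
    (Finset.sum_sdiff hTsub).symm
  have hdegnn : ∀ z : V, (0:ℝ) ≤ (G.degree z : ℝ) := fun z => Nat.cast_nonneg _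
  have hbound1 : ∑ z ∈ Finset.univ.erase a \ T, (G.degree z : ℝ) * min (d : ℝ) (G.dist z a : ℝ)
      ≤ ∑ z ∈ Finset.univ.erase a \ T, (G.degree z : ℝ) * (d : ℝ) := by
    refine Finset.sum_le_sum fun z _ => ?_
    exact mul_le_mul_of_nonneg_left (min_le_left _ _) (hdegnn z)
  have himg : ∀ (f : V → ℝ), ∑ z ∈ T, f z = ∑ i ∈ Finset.Ioo 0 d, f (p.getVert i) :=
    fun f => Finset.sum_image hinj
  have hbound2 : ∑ z ∈ T, (G.degree z : ℝ) * min (d : ℝ) (G.dist z a : ℝ)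
      ≤ ∑ i ∈ Finset.Ioo 0 d, ((G.degree (p.getVert i) : ℝ) * (d : ℝ) - 2 * ((d:ℝ) - (i:ℝ))) := by
    rw [himg]
    refine Finset.sum_le_sum fun i hi => ?_
    have hi' := Finset.mem_Ioo.mp hi
    rw [hvd' i (le_of_lt hi'.2)]
    have hmin : min (d : ℝ) (i : ℝ) = (i : ℝ) :=
      min_eq_right (by exact_mod_cast le_of_lt hi'.2)
    rw [hmin]
    have h2 : (2:ℝ) ≤ (G.degree (p.getVert i) : ℝ) := by exact_mod_cast hdeg2 i hi
    have hdi : (0:ℝ) ≤ (d:ℝ) - (i:ℝ) := by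
      have : (i:ℝ) ≤ (d:ℝ) := by exact_mod_cast le_of_lt hi'.2
      linarith
    nlinarith
  have hsum_deg : ∑ z ∈ Finset.univ.erase a, (G.degree z : ℝ)
      = 2 * (m : ℝ) - (G.degree a : ℝ) := by
    have h1 : ∑ z ∈ Finset.univ.erase a, (G.degree z) + G.degree a
        = ∑ z : V, (G.degree z) := Finset.sum_erase_add _ _ (Finset.mem_univ a)
    have h2 : ∑ z : V, G.degree z = 2 * m := by
      rw [G.sum_degrees_eq_twice_card_edges, hm]
    have : ∑ z ∈ Finset.univ.erase a, (G.degree z) = 2 * m - G.degree a := by omega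
    have hda : G.degree a ≤ 2 * m := by omega
    have h4 : ∑ z ∈ Finset.univ.erase a, (G.degree z : ℝ)
        = ((∑ z ∈ Finset.univ.erase a, G.degree z : ℕ) : ℝ) := by
      push_cast; rfl
    rw [h4, this, Nat.cast_sub hda]
    push_cast
    ring
  have hdega : 1 ≤ G.degree a := by
    have hadj : G.Adj a (p.getVert 1) := by
      have := p.adj_getVert_succ (i := 0) (by omega)
      rwa [p.getVert_zero] at this
    have := G.degree_pos_iff_exists_adj a |>.mpr ⟨_, hadj⟩
    omega
  have hrecomb : ∑ z ∈ Finset.univ.erase a \ T, (G.degree z : ℝ) * (d : ℝ)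
        + ∑ i ∈ Finset.Ioo 0 d, (G.degree (p.getVert i) : ℝ) * (d : ℝ)
      = ∑ z ∈ Finset.univ.erase a, (G.degree z : ℝ) * (d : ℝ) := by
    rw [← himg (fun z => (G.degree z : ℝ) * (d : ℝ))]
    exact Finset.sum_sdiff hTsub
  have hgauss := gauss_sum d hd1
  have hfinal : ∑ z ∈ Finset.univ.erase a, (G.degree z : ℝ) * (d : ℝ)
      = (2 * (m : ℝ) - (G.degree a : ℝ)) * (d : ℝ) := by
    rw [← hsum_deg, Finset.sum_mul]
  have hdega' : (1:ℝ) ≤ (G.degree a : ℝ) := by exact_mod_cast hdega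
  have hd1' : (1:ℝ) ≤ (d : ℝ) := by exact_mod_cast hd1
  have hexpand : ∑ i ∈ Finset.Ioo 0 d, ((G.degree (p.getVert i) : ℝ) * (d : ℝ)
        - 2 * ((d:ℝ) - (i:ℝ)))
      = ∑ i ∈ Finset.Ioo 0 d, (G.degree (p.getVert i) : ℝ) * (d : ℝ)
        - 2 * ∑ i ∈ Finset.Ioo 0 d, ((d:ℝ) - (i:ℝ)) := by
    rw [Finset.sum_sub_distrib, Finset.mul_sum]
  calc ∑ z ∈ Finset.univ.erase a, (G.degree z : ℝ) * min (d : ℝ) (G.dist z a : ℝ)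
      ≤ ∑ z ∈ Finset.univ.erase a \ T, (G.degree z : ℝ) * (d : ℝ)
        + ∑ i ∈ Finset.Ioo 0 d, ((G.degree (p.getVert i) : ℝ) * (d : ℝ)
          - 2 * ((d:ℝ) - (i:ℝ))) := by
        rw [hsplit]; exact add_le_add hbound1 hbound2
    _ = ∑ z ∈ Finset.univ.erase a, (G.degree z : ℝ) * (d : ℝ)
        - 2 * ∑ i ∈ Finset.Ioo 0 d, ((d:ℝ) - (i:ℝ)) := by
        rw [hexpand, ← hrecomb]; ring
    _ = (2 * (m : ℝ) - (G.degree a : ℝ)) * (d : ℝ) - ((d:ℝ)^2 - (d:ℝ)) := by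
        rw [hfinal, hgauss]
    _ ≤ 2 * (m : ℝ) * (d : ℝ) - (d : ℝ)^2 := by nlinarith

end HitProof

open HitProof in
/-- For a simple random walk on a finite connected graph `G` with `m` edges and any
vertices `x, y` at distance `d`, the hitting time satisfies `H(x,y) ≤ m² − (m−d)²`. -/
theorem hitting_time_le_of_dist {V : Type*} [Fintype V] [DecidableEq V]
    (G : SimpleGraph V) [DecidableRel G.Adj] (hconn : G.Connected)
    (m : ℕ) (hm : m = G.edgeFinset.card)
    (x y : V) (d : ℕ) (hd : d = G.dist x y)
    (H : V → ℝ) (hH : IsHittingTime G y H) :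
    H x ≤ (m : ℝ) ^ 2 - ((m : ℝ) - (d : ℝ)) ^ 2 := by
  by_cases hd0 : d = 0
  · have hxy : x = y := hconn.dist_eq_zero_iff.mp (by omega)
    have hx0 : H x = 0 := by rw [hxy]; exact hH.1
    rw [hx0, hd0]
    push_cast
    ring_nf
    norm_num
  · have hd1 : 1 ≤ d := by omega
    have hdxa : d = G.dist x y := hd
    have hxa : x ≠ y := by
      intro h
      rw [h, SimpleGraph.dist_self] at hd
      omega
    have hrepr : H x = hdef hconn y x := H_eq hconn y H hH.1 hH.2 x
    have hdefx : hdef hconn y x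
        = ∑ z ∈ Finset.univ.erase y, (G.degree z : ℝ) * Grn hconn y z x := rfl
    have hterm : ∀ z ∈ Finset.univ.erase y,
        (G.degree z : ℝ) * Grn hconn y z x
          ≤ (G.degree z : ℝ) * min (d : ℝ) (G.dist z y : ℝ) := by
      intro z hzmem
      have hz : z ≠ y := (Finset.mem_erase.mp hzmem).1
      refine mul_le_mul_of_nonneg_left (le_min ?_ ?_) (Nat.cast_nonneg _)
      · calc Grn hconn y z x = Grn hconn y x z := Grn_symm hconn y z x
          _ ≤ Grn hconn y x x := Grn_le_diag hconn hxa z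
          _ ≤ (G.dist x y : ℝ) := Grn_diag_le_dist hconn y (G.dist x y) x le_rfl
          _ = (d : ℝ) := by rw [← hdxa]
      · calc Grn hconn y z x ≤ Grn hconn y z z := Grn_le_diag hconn hz x
          _ ≤ (G.dist z y : ℝ) := Grn_diag_le_dist hconn y (G.dist z y) z le_rfl
    have hbig := final_sum_bound hconn y x m d hm hdxa hd1
    have hchain : H x ≤ 2 * (m : ℝ) * (d : ℝ) - (d : ℝ)^2 := by
      calc H x = ∑ z ∈ Finset.univ.erase y, (G.degree z : ℝ) * Grn hconn y z x := by
            rw [hrepr, hdefx]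
        _ ≤ ∑ z ∈ Finset.univ.erase y, (G.degree z : ℝ) * min (d : ℝ) (G.dist z y : ℝ) :=
            Finset.sum_le_sum hterm
        _ ≤ 2 * (m : ℝ) * (d : ℝ) - (d : ℝ)^2 := hbig
    have : (m : ℝ) ^ 2 - ((m : ℝ) - (d : ℝ)) ^ 2 = 2 * (m : ℝ) * (d : ℝ) - (d : ℝ)^2 := by
      ring
    linarith
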